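/- In a bumpless pipe dream or almost bumpless pipe dream, suppose p = π(x) and q = π(y) are two pipes that cross exactly once and bump exactly once, and that the j-shaped corner in the bump tile belongs to p. If the positions of the cross tile and the bump tile are swapped (replacing the bump tile by a '+'-tile and the '+'-tile where p and q crossed by a bump tile), then in the new bump tile the r-shaped turn belongs to p. -/

import Mathlib

namespace BPD

/-- The six legal tiles of a bumpless pipe dream, plus the `Bump` tile
(used in *almost* bumpless pipe dreams). -/
inductive Tile : Type
  | R      -- pipe turning from the south edge to the east edge ("r-tile")
  | J      -- pipe turning from the west edge to the north edge ("j-tile")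
  | Cross  -- two pipes crossing ("+"-tile)
  | Blank  -- blank tile
  | H      -- horizontal pipe segment ("−"-tile)
  | V      -- vertical pipe segment ("|"-tile)
  | Bump   -- bump tile: one r-shaped turn and one j-shaped turn
  deriving DecidableEq

instance : Fintype Tile where
  elems := {Tile.R, Tile.J, Tile.Cross, Tile.Blank, Tile.H, Tile.V, Tile.Bump}
  complete := by intro x; cases x <;> simp

/-- A tiling of the n×n grid, in matrix coordinates (row, column). -/
abbrev Tiling (n : ℕ) := Fin n → Fin n → Tile

namespace Tile

/-- Does a tile carry a pipe on its south edge? -/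
def southE : Tile → Bool
  | R => true | Cross => true | V => true | Bump => true | _ => false

/-- Does a tile carry a pipe on its east edge? -/
def eastE : Tile → Bool
  | R => true | Cross => true | H => true | Bump => true | _ => false

/-- Does a tile carry a pipe on its north edge? -/
def northE : Tile → Bool
  | J => true | Cross => true | V => true | Bump => true | _ => false

/-- Does a tile carry a pipe on its west edge? -/
def westE : Tile → Bool
  | J => true | Cross => true | H => true | Bump => true | _ => false

end Tile

/-- Edge-matching and boundary conditions: adjacent tiles agree on their shared
edge; every column carries a pipe through the south boundary, every row carries a
pipe through the east boundary, and no pipe touches the north or west boundary.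
This says exactly that the tiling consists of `n` pipes, each traveling from the
south boundary to the east boundary. -/
def Wellformed {n : ℕ} (T : Tiling n) : Prop :=
  (∀ i j : Fin n, ∀ h : (j : ℕ) + 1 < n,
      Tile.eastE (T i j) = Tile.westE (T i ⟨(j : ℕ) + 1, h⟩)) ∧
  (∀ i j : Fin n, ∀ h : (i : ℕ) + 1 < n,
      Tile.southE (T i j) = Tile.northE (T ⟨(i : ℕ) + 1, h⟩ j)) ∧
  (∀ j : Fin n, Tile.southE (T ⟨n - 1, by have := j.2; omega⟩ j) = true) ∧
  (∀ i : Fin n, Tile.eastE (T i ⟨n - 1, by have := i.2; omega⟩) = true) ∧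
  (∀ j : Fin n, Tile.northE (T ⟨0, by have := j.2; omega⟩ j) = false) ∧
  (∀ i : Fin n, Tile.westE (T i ⟨0, by have := i.2; omega⟩) = false)

/-- The state of a pipe while being traced through the grid:
`inside i j up` means the pipe is in cell `(i,j)`, having entered from the south
edge (`up = true`, traveling upward) or from the west edge (`up = false`,
traveling rightward); `exited r` means the pipe has left through the east
boundary at row `r`. -/
inductive PState (n : ℕ) : Type
  | inside (i j : Fin n) (up : Bool)
  | exited (row : Fin n)
  | stuck
  deriving DecidableEq

/-- Exit a cell through its east edge. -/
def goEast {n : ℕ} (i j : Fin n) : PState n :=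
  if h : (j : ℕ) + 1 < n then PState.inside i ⟨(j : ℕ) + 1, h⟩ false
  else PState.exited i

/-- Exit a cell through its north edge. -/
def goNorth {n : ℕ} (i j : Fin n) : PState n :=
  if h : 0 < (i : ℕ) then PState.inside ⟨(i : ℕ) - 1, by have := i.2; omega⟩ j true
  else PState.stuck

/-- One step of tracing a pipe through a tiling. -/
def stepSt {n : ℕ} (T : Tiling n) : PState n → PState n
  | PState.inside i j up =>
    match up, T i j with
    | true, Tile.R => goEast i j
    | true, Tile.V => goNorth i j
    | true, Tile.Cross => goNorth i j
    | true, Tile.Bump => goEast i j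
    | false, Tile.J => goNorth i j
    | false, Tile.H => goEast i j
    | false, Tile.Cross => goEast i j
    | false, Tile.Bump => goNorth i j
    | _, _ => PState.stuck
  | PState.exited r => PState.exited r
  | PState.stuck => PState.stuck

/-- The starting state of the pipe entering the grid at the south boundary in
column `c` (0-indexed): it enters cell `(n-1, c)` from the south. -/
def start {n : ℕ} (c : Fin n) : PState n :=
  PState.inside ⟨n - 1, by have := c.2; omega⟩ c true

/-- The pipe entering at the south boundary in column `c` reaches the state `s`. -/
def reaches {n : ℕ} (T : Tiling n) (c : Fin n) (s : PState n) : Prop :=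
  ∃ k : ℕ, (stepSt T)^[k] (start c) = s

/-- The tiling realizes the permutation `π`: for every row `i` of the east
boundary, the pipe exiting there is the one labeled `π i`, i.e. the one
entering at the south boundary in column `π i` (0-indexed). -/
def TracesTo {n : ℕ} (T : Tiling n) (π : Equiv.Perm (Fin n)) : Prop :=
  ∀ i : Fin n, reaches T (π i) (PState.exited i)

/-- The pipes (labeled by their entry columns) `p` and `q` cross at the
'+'-tile in position `(r, c)`. -/
def crossingAt {n : ℕ} (T : Tiling n) (p q : Fin n) (r c : Fin n) : Prop :=
  T r c = Tile.Cross ∧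
    ((reaches T p (PState.inside r c true) ∧ reaches T q (PState.inside r c false)) ∨
     (reaches T p (PState.inside r c false) ∧ reaches T q (PState.inside r c true)))

/-- No two pipes cross twice. -/
def Reduced {n : ℕ} (T : Tiling n) : Prop :=
  ∀ p q r₁ c₁ r₂ c₂ : Fin n,
    crossingAt T p q r₁ c₁ → crossingAt T p q r₂ c₂ → (r₁, c₁) = (r₂, c₂)

/-- `T` is a (reduced) bumpless pipe dream of the permutation `π`. -/
def IsBPD {n : ℕ} (T : Tiling n) (π : Equiv.Perm (Fin n)) : Prop :=
  Wellformed T ∧ (∀ i j : Fin n, T i j ≠ Tile.Bump) ∧ TracesTo T π ∧ Reduced T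

/-- `T` is an *almost* bumpless pipe dream of `π`, with its unique bump tile at
position `(i, j)`. -/
def IsAlmostBPD {n : ℕ} (T : Tiling n) (π : Equiv.Perm (Fin n)) (i j : Fin n) : Prop :=
  Wellformed T ∧ T i j = Tile.Bump ∧
    (∀ i' j' : Fin n, T i' j' = Tile.Bump → (i', j') = (i, j)) ∧
    TracesTo T π ∧ Reduced T

/-- `T` is a bumpless pipe dream or an almost bumpless pipe dream of `π`. -/
def BPDorAlmost {n : ℕ} (T : Tiling n) (π : Equiv.Perm (Fin n)) : Prop :=
  IsBPD T π ∨ ∃ u v : Fin n, IsAlmostBPD T π u v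

/-- The set of positions of blank tiles of `T`. -/
def blanks {n : ℕ} (T : Tiling n) : Finset (Fin n × Fin n) :=
  Finset.univ.filter fun p => T p.1 p.2 = Tile.Blank

/-- The number of blank tiles of `T` in row `i`. -/
def rowBlanks {n : ℕ} (T : Tiling n) (i : Fin n) : ℕ :=
  (Finset.univ.filter fun j => T i j = Tile.Blank).card

open scoped Classical in
/-- The single Schubert polynomial of `π`, computed with bumpless pipe dreams:
`𝔖_π(x) = Σ_{D ∈ BPD(π)} Π_{(i,j) ∈ blank(D)} x_i`. -/
noncomputable def Schub (n : ℕ) (π : Equiv.Perm (Fin n)) : MvPolynomial (Fin n) ℤ :=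
  ∑ T : Tiling n, if IsBPD T π then ∏ p ∈ blanks T, MvPolynomial.X p.1 else 0

open scoped Classical in
/-- The double Schubert polynomial of `π`, computed with bumpless pipe dreams:
`𝔖_π(x, −y) = Σ_{D ∈ BPD(π)} Π_{(i,j) ∈ blank(D)} (x_i − y_j)`.
The variable `x_i` is `X (Sum.inl i)` and `y_j` is `X (Sum.inr j)`. -/
noncomputable def DSchub (n : ℕ) (π : Equiv.Perm (Fin n)) :
    MvPolynomial (Fin n ⊕ Fin n) ℤ :=
  ∑ T : Tiling n,
    if IsBPD T π then
      ∏ p ∈ blanks T,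
        (MvPolynomial.X (Sum.inl p.1) - MvPolynomial.X (Sum.inr p.2))
    else 0

/-- The Coxeter length of a permutation: its number of inversions. -/
def len {n : ℕ} (π : Equiv.Perm (Fin n)) : ℕ :=
  (Finset.univ.filter fun p : Fin n × Fin n => p.1 < p.2 ∧ π p.2 < π p.1).card

/-- `σ ⋗ π`: `σ` covers `π` in the strong Bruhat order, i.e. `σ = π·t` for some
transposition `t` and `ℓ(σ) = ℓ(π) + 1`. -/
def Covers {n : ℕ} (σ π : Equiv.Perm (Fin n)) : Prop :=
  (∃ a b : Fin n, a ≠ b ∧ σ = π * Equiv.swap a b) ∧ len σ = len π + 1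

end BPD

namespace BPD

/-- Swap the positions of a bump tile at `(u, v)` and a '+'-tile at `(i, j)`:
the bump tile is replaced by a '+'-tile and the '+'-tile by a bump tile. -/
def swapCrossBump {n : ℕ} (T : Tiling n) (u v i j : Fin n) : Tiling n := fun r c =>
  if r = u ∧ c = v then Tile.Cross
  else if r = i ∧ c = j then Tile.Bump
  else T r c

end BPD


namespace BPD

variable {n : ℕ}

theorem iterate_exited (T : Tiling n) (m : ℕ) (r : Fin n) :
    (stepSt T)^[m] (PState.exited r) = PState.exited r := by
  induction m with
  | zero => rfl
  | succ k ih => rw [Function.iterate_succ_apply', ih]; rfl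

theorem exit_unique (T : Tiling n) (s : PState n) (m m' : ℕ) (r r' : Fin n)
    (h : (stepSt T)^[m] s = PState.exited r) (h' : (stepSt T)^[m'] s = PState.exited r') :
    r = r' := by
  rcases le_total m m' with hle | hle
  · have h2 : (stepSt T)^[(m' - m) + m] s = PState.exited r := by
      rw [Function.iterate_add_apply, h, iterate_exited]
    rw [Nat.sub_add_cancel hle, h'] at h2
    exact (PState.exited.inj h2).symm
  · have h2 : (stepSt T)^[(m - m') + m'] s = PState.exited r' := by
      rw [Function.iterate_add_apply, h', iterate_exited]
    rw [Nat.sub_add_cancel hle, h] at h2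
    exact PState.exited.inj h2

/-- Backward step: if a step lands on an inside state, the previous state was inside
    the cell just south (if entering from the south) or just west (if from the west). -/
theorem back (T : Tiling n) (s : PState n) (a b : Fin n) (up : Bool)
    (h : stepSt T s = PState.inside a b up) :
    ∃ (a' b' : Fin n) (up' : Bool), s = PState.inside a' b' up' ∧
      ((up = true ∧ (a' : ℕ) = (a : ℕ) + 1 ∧ (b' : ℕ) = (b : ℕ)) ∨
       (up = false ∧ (a' : ℕ) = (a : ℕ) ∧ (b : ℕ) = (b' : ℕ) + 1)) := by
  cases s with
  | exited r => simp [stepSt] at h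
  | stuck => simp [stepSt] at h
  | inside a' b' up' =>
    refine ⟨a', b', up', rfl, ?_⟩
    cases up' <;> rcases ht : T a' b' <;>
      simp only [stepSt, ht, goEast, goNorth] at h <;>
      first
        | (exfalso; simp at h; done)
        | (split at h <;>
            first
              | (exfalso; simp at h; done)
              | (injection h with h1 h2 h3
                 subst h1 h2 h3
                 simp <;> omega))

/-- Along a trajectory ending inside, all earlier states are inside, and the
diagonal coordinate `row - col` decreases by exactly 1 each step. -/
theorem chain (T : Tiling n) (s : PState n) :
    ∀ (d k m : ℕ), k + d = m → ∀ (a b : Fin n) (up : Bool),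
      (stepSt T)^[m] s = PState.inside a b up →
      ∃ (a' b' : Fin n) (up' : Bool), (stepSt T)^[k] s = PState.inside a' b' up' ∧
        (a' : ℤ) - (b' : ℤ) = ((a : ℤ) - (b : ℤ)) + d := by
  intro d
  induction d with
  | zero =>
    intro k m hkm a b up h
    exact ⟨a, b, up, by rw [show k = m by omega]; exact h, by push_cast; ring⟩
  | succ d ih =>
    intro k m hkm a b up h
    have hm : m = (m - 1) + 1 := by omega
    rw [hm, Function.iterate_succ_apply'] at h
    obtain ⟨a', b', up', hs, hrel⟩ := back T _ a b up h
    obtain ⟨a2, b2, up2, h2, hd2⟩ := ih k (m - 1) (by omega) a' b' up' hs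
    refine ⟨a2, b2, up2, h2, ?_⟩
    rcases hrel with ⟨_, h1, h2'⟩ | ⟨_, h1, h2'⟩ <;> push_cast at * <;> omega

theorem delta_time (T : Tiling n) (s : PState n) (k m : ℕ) (hkm : k ≤ m)
    (a b : Fin n) (up : Bool) (a' b' : Fin n) (up' : Bool)
    (hk : (stepSt T)^[k] s = PState.inside a b up)
    (hm : (stepSt T)^[m] s = PState.inside a' b' up') :
    (a : ℤ) - (b : ℤ) = ((a' : ℤ) - (b' : ℤ)) + ((m - k : ℕ) : ℤ) := by
  obtain ⟨a2, b2, up2, h2, hd⟩ := chain T s (m - k) k m (by omega) a' b' up' hm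
  rw [hk] at h2
  injection h2 with h1 h2' h3
  subst h1 h2'
  exact hd

/-- If the earlier state in a trajectory is strictly below (same antidiagonal) and
the later state strictly above, the two pipes share a cell in between. -/
theorem collide (T : Tiling n) :
    ∀ (Δ : ℕ) (s₁ s₂ : PState n) (a₁ b₁ a₂ b₂ e₁ f₁ e₂ f₂ : Fin n) (u₁ u₂ w₁ w₂ : Bool),
      s₁ = PState.inside a₁ b₁ u₁ → s₂ = PState.inside a₂ b₂ u₂ →
      (a₁ : ℤ) - (b₁ : ℤ) = (a₂ : ℤ) - (b₂ : ℤ) → (a₂ : ℕ) < a₁ →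
      (stepSt T)^[Δ] s₁ = PState.inside e₁ f₁ w₁ →
      (stepSt T)^[Δ] s₂ = PState.inside e₂ f₂ w₂ →
      (e₁ : ℕ) < e₂ →
      ∃ t, t ≤ Δ ∧ ∃ (a b : Fin n) (v₁ v₂ : Bool),
        (stepSt T)^[t] s₁ = PState.inside a b v₁ ∧
        (stepSt T)^[t] s₂ = PState.inside a b v₂ := by
  intro Δ
  induction Δ with
  | zero =>
    intro s₁ s₂ a₁ b₁ a₂ b₂ e₁ f₁ e₂ f₂ u₁ u₂ w₁ w₂ hs1 hs2 hdiag hlt hE1 hE2 hlt2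
    exfalso
    simp only [Function.iterate_zero_apply] at hE1 hE2
    rw [hs1] at hE1; rw [hs2] at hE2
    injection hE1 with q1 q2 q3; injection hE2 with r1 r2 r3
    subst q1 r1
    omega
  | succ Δ ih =>
    intro s₁ s₂ a₁ b₁ a₂ b₂ e₁ f₁ e₂ f₂ u₁ u₂ w₁ w₂ hs1 hs2 hdiag hlt hE1 hE2 hlt2
    obtain ⟨a₁', b₁', u₁', h1', hd1⟩ :=
      chain T s₁ Δ 1 (Δ + 1) (by omega) e₁ f₁ w₁ hE1
    obtain ⟨a₂', b₂', u₂', h2', hd2⟩ :=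
      chain T s₂ Δ 1 (Δ + 1) (by omega) e₂ f₂ w₂ hE2
    rw [Function.iterate_one] at h1' h2'
    obtain ⟨c₁, cb₁, cu₁, hc1, hrel1⟩ := back T s₁ a₁' b₁' u₁' h1'
    obtain ⟨c₂, cb₂, cu₂, hc2, hrel2⟩ := back T s₂ a₂' b₂' u₂' h2'
    rw [hs1] at hc1; rw [hs2] at hc2
    injection hc1 with q1 q2 q3; injection hc2 with r1 r2 r3
    subst q1 q2 r1 r2
    -- rows of the next states
    have hrow1 : (a₁' : ℕ) = a₁ ∨ (a₁ : ℕ) = a₁' + 1 := by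
      rcases hrel1 with ⟨_, h1, _⟩ | ⟨_, h1, _⟩ <;> omega
    have hrow2 : (a₂' : ℕ) = a₂ ∨ (a₂ : ℕ) = a₂' + 1 := by
      rcases hrel2 with ⟨_, h1, _⟩ | ⟨_, h1, _⟩ <;> omega
    have hdiag1 : (a₁' : ℤ) - (b₁' : ℤ) = (a₁ : ℤ) - (b₁ : ℤ) - 1 := by
      rcases hrel1 with ⟨_, h1, h2⟩ | ⟨_, h1, h2⟩ <;> push_cast at * <;> omega
    have hdiag2 : (a₂' : ℤ) - (b₂' : ℤ) = (a₂ : ℤ) - (b₂ : ℤ) - 1 := by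
      rcases hrel2 with ⟨_, h1, h2⟩ | ⟨_, h1, h2⟩ <;> push_cast at * <;> omega
    by_cases hcmp : (a₂' : ℕ) = a₁'
    · have hb : b₂' = b₁' := by
        apply Fin.ext
        omega
      have ha : a₂' = a₁' := Fin.ext hcmp
      refine ⟨1, by omega, a₁', b₁', u₁', u₂', by rw [Function.iterate_one]; exact h1', ?_⟩
      rw [Function.iterate_one, h2', ha, hb]
    · have hlt' : (a₂' : ℕ) < a₁' := by omega
      obtain ⟨t, ht, a, b, v₁, v₂, hcol1, hcol2⟩ :=
        ih (stepSt T s₁) (stepSt T s₂) a₁' b₁' a₂' b₂' e₁ f₁ e₂ f₂ u₁' u₂' w₁ w₂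
          h1' h2' (by omega) hlt'
          (by rw [← Function.iterate_succ_apply]; exact hE1)
          (by rw [← Function.iterate_succ_apply]; exact hE2) hlt2
      exact ⟨t + 1, by omega, a, b, v₁, v₂,
        by rw [Function.iterate_succ_apply]; exact hcol1,
        by rw [Function.iterate_succ_apply]; exact hcol2⟩

theorem step_congr (T T' : Tiling n) (a b : Fin n) (up : Bool)
    (h : T' a b = T a b) :
    stepSt T' (PState.inside a b up) = stepSt T (PState.inside a b up) := by
  show (match up, T' a b with
    | true, Tile.R => goEast a b
    | true, Tile.V => goNorth a b
    | true, Tile.Cross => goNorth a b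
    | true, Tile.Bump => goEast a b
    | false, Tile.J => goNorth a b
    | false, Tile.H => goEast a b
    | false, Tile.Cross => goEast a b
    | false, Tile.Bump => goNorth a b
    | _, _ => PState.stuck) = _
  rw [h]
  rfl

theorem transfer (T T' : Tiling n) (s : PState n) :
    ∀ k, (∀ t, t < k → ∃ (a b : Fin n) (up : Bool),
        (stepSt T)^[t] s = PState.inside a b up ∧ T' a b = T a b) →
      (stepSt T')^[k] s = (stepSt T)^[k] s := by
  intro k
  induction k with
  | zero => intro _; rfl
  | succ k ih =>
    intro h
    rw [Function.iterate_succ_apply', Function.iterate_succ_apply',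
      ih (fun t ht => h t (by omega))]
    obtain ⟨a, b, up, hst, htl⟩ := h k (by omega)
    rw [hst]
    exact step_congr T T' a b up htl

theorem swap_ne (T : Tiling n) (u v i j c d : Fin n)
    (h1 : ¬(c = u ∧ d = v)) (h2 : ¬(c = i ∧ d = j)) :
    swapCrossBump T u v i j c d = T c d := by
  simp only [swapCrossBump, if_neg h1, if_neg h2]

theorem swap_uv (T : Tiling n) (u v i j : Fin n) :
    swapCrossBump T u v i j u v = Tile.Cross := by
  simp [swapCrossBump]

/-- Transfer a trajectory from `T` to the swapped tiling, provided the diagonal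
coordinates of all strictly earlier states avoid the two swapped cells. -/
theorem transfer_early (T : Tiling n) (u v i j : Fin n) (s : PState n) (K : ℕ)
    (a b : Fin n) (up : Bool)
    (hK : (stepSt T)^[K] s = PState.inside a b up)
    (hg : ∀ m : ℤ, 1 ≤ m → m ≤ (K : ℤ) →
      ((a : ℤ) - (b : ℤ) + m ≠ (u : ℤ) - (v : ℤ) ∧
       (a : ℤ) - (b : ℤ) + m ≠ (i : ℤ) - (j : ℤ))) :
    (stepSt (swapCrossBump T u v i j))^[K] s = PState.inside a b up := by
  rw [transfer T (swapCrossBump T u v i j) s K ?_]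
  · exact hK
  intro t ht
  obtain ⟨c, d, w, hc, hδ⟩ := chain T s (K - t) t K (by omega) a b up hK
  have hm := hg ((K : ℤ) - t) (by omega) (by omega)
  refine ⟨c, d, w, hc, swap_ne T u v i j c d ?_ ?_⟩
  · rintro ⟨rfl, rfl⟩
    have : ((K - t : ℕ) : ℤ) = (K : ℤ) - t := by omega
    omega
  · rintro ⟨rfl, rfl⟩
    have : ((K - t : ℕ) : ℤ) = (K : ℤ) - t := by omega
    omega

/-- If the two pipes `π x` and `π y` occupy a common cell (and both continue
onward from it), that cell is the crossing or the bump. -/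
theorem shared_cell (T : Tiling n) (π : Equiv.Perm (Fin n)) (x y u v i j : Fin n)
    (htr : TracesTo T π)
    (hbmpU : ∀ i' j' : Fin n, T i' j' = Tile.Bump → (i', j') = (u, v))
    (honce : ∀ r c : Fin n, crossingAt T (π x) (π y) r c → (r, c) = (i, j))
    (hxy : x ≠ y)
    (a b : Fin n) (v₁ v₂ : Bool) (k₁ k₂ : ℕ)
    (h1 : (stepSt T)^[k₁] (start (π x)) = PState.inside a b v₁)
    (h2 : (stepSt T)^[k₂] (start (π y)) = PState.inside a b v₂)
    (hn1 : ∃ (A B : Fin n) (U : Bool), stepSt T (PState.inside a b v₁) = PState.inside A B U)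
    (hn2 : ∃ (A B : Fin n) (U : Bool), stepSt T (PState.inside a b v₂) = PState.inside A B U) :
    ((a, b) = (i, j)) ∨ ((a, b) = (u, v)) := by
  by_cases hv : v₁ = v₂
  · exfalso
    subst hv
    obtain ⟨m, hm⟩ := htr x
    obtain ⟨m', hm'⟩ := htr y
    have hk1 : k₁ ≤ m := by
      by_contra h
      have e : (stepSt T)^[(k₁ - m) + m] (start (π x)) = PState.exited x := by
        rw [Function.iterate_add_apply, hm, iterate_exited]
      rw [Nat.sub_add_cancel (by omega : m ≤ k₁)] at e
      rw [h1] at e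
      cases e
    have hk2 : k₂ ≤ m' := by
      by_contra h
      have e : (stepSt T)^[(k₂ - m') + m'] (start (π y)) = PState.exited y := by
        rw [Function.iterate_add_apply, hm', iterate_exited]
      rw [Nat.sub_add_cancel (by omega : m' ≤ k₂)] at e
      rw [h2] at e
      cases e
    have e1 : (stepSt T)^[m - k₁] (PState.inside a b v₁) = PState.exited x := by
      rw [← h1, ← Function.iterate_add_apply, Nat.sub_add_cancel hk1]
      exact hm
    have e2 : (stepSt T)^[m' - k₂] (PState.inside a b v₁) = PState.exited y := by
      rw [← h2, ← Function.iterate_add_apply, Nat.sub_add_cancel hk2]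
      exact hm'
    exact hxy (exit_unique T (PState.inside a b v₁) _ _ x y e1 e2)
  · have hcases : (v₁ = true ∧ v₂ = false) ∨ (v₁ = false ∧ v₂ = true) := by
      cases v₁ <;> cases v₂
      · exact absurd rfl hv
      · exact Or.inr ⟨rfl, rfl⟩
      · exact Or.inl ⟨rfl, rfl⟩
      · exact absurd rfl hv
    rcases ht : T a b <;>
    first
      | exact Or.inr (hbmpU a b ht)
      | (refine Or.inl (honce a b ⟨ht, ?_⟩)
         rcases hcases with ⟨hv1, hv2⟩ | ⟨hv1, hv2⟩
         · subst hv1; subst hv2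
           exact Or.inl ⟨⟨k₁, h1⟩, ⟨k₂, h2⟩⟩
         · subst hv1; subst hv2
           exact Or.inr ⟨⟨k₁, h1⟩, ⟨k₂, h2⟩⟩)
      | (exfalso
         rcases hcases with ⟨hv1, hv2⟩ | ⟨hv1, hv2⟩ <;> subst hv1 <;> subst hv2 <;>
         first
           | (obtain ⟨A, B, U, hA⟩ := hn1
              simp only [stepSt, ht] at hA
              cases hA)
           | (obtain ⟨A, B, U, hA⟩ := hn2
              simp only [stepSt, ht] at hA
              cases hA))

end BPD

open BPD in
/-- **Lemma 4.** In an almost bumpless pipe dream of `π` with its bump tile at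
`(u, v)`, suppose the pipes `p = π(x)` and `q = π(y)` (labeled by their entry
columns `π x`, `π y`) cross exactly once, at the '+'-tile `(i, j)`, and bump
(exactly) once, at `(u, v)`, with the j-shaped corner of the bump belonging to
`p` (i.e. `p` enters `(u,v)` from the west). After swapping the positions of
the cross and the bump, the r-shaped turn in the new bump tile at `(i, j)`
belongs to `p` (i.e. `p` enters `(i,j)` from the south). -/
theorem cross_bump_swap_r (n : ℕ) (T : Tiling n) (π : Equiv.Perm (Fin n))
    (u v i j x y : Fin n)
    (hT : IsAlmostBPD T π u v)
    (hxy : x ≠ y)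
    (hpj : reaches T (π x) (PState.inside u v false))
    (hqr : reaches T (π y) (PState.inside u v true))
    (hcross : crossingAt T (π x) (π y) i j)
    (honce : ∀ r c : Fin n, crossingAt T (π x) (π y) r c → (r, c) = (i, j)) :
    reaches (swapCrossBump T u v i j) (π x) (PState.inside i j true) := by
  obtain ⟨hWF, hbmp, hbmpU, htr, hred⟩ := hT
  obtain ⟨hTij, hbr⟩ := hcross
  obtain ⟨Mp, hMp⟩ := hpj
  obtain ⟨Mq, hMq⟩ := hqr
  have hij_ne_uv : ¬(i = u ∧ j = v) := by
    rintro ⟨rfl, rfl⟩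
    rw [hbmp] at hTij
    exact Tile.noConfusion hTij
  rcases hbr with ⟨⟨Kp, hKp⟩, ⟨Kq, hKq⟩⟩ | ⟨⟨Kp, hKp⟩, ⟨Kq, hKq⟩⟩
  · -- Branch A : p enters the cross from the south, q from the west
    have hKpMp : Kp ≠ Mp := by
      intro h; rw [h, hMp] at hKp; injection hKp with e1 e2 e3; exact hij_ne_uv ⟨e1.symm, e2.symm⟩
    have hKqMq : Kq ≠ Mq := by
      intro h; rw [h, hMq] at hKq; injection hKq with e1 e2 e3; exact hij_ne_uv ⟨e1.symm, e2.symm⟩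
    rcases lt_or_gt_of_ne hKpMp with ho | ho
    · -- cross before bump: direct transfer
      have hdp := delta_time T (start (π x)) Kp Mp (le_of_lt ho) i j true u v false hKp hMp
      exact ⟨Kp, transfer_early T u v i j (start (π x)) Kp i j true hKp
        (by intro m hm1 hm2; constructor <;> intro hEq <;> omega)⟩
    · -- bump before cross: impossible in this branch (IVT contradiction)
      exfalso
      have hdp := delta_time T (start (π x)) Mp Kp (le_of_lt ho) u v false i j true hMp hKp
      have hoq : Mq < Kq := by
        rcases lt_or_gt_of_ne hKqMq with h | h
        · exfalso
          have := delta_time T (start (π y)) Kq Mq (le_of_lt h) i j false u v true hKq hMq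
          omega
        · exact h
      have hdq := delta_time T (start (π y)) Mq Kq (le_of_lt hoq) u v true i j false hMq hKq
      -- q just after the bump
      obtain ⟨A, B, U, hs1, hδ1⟩ :=
        chain T (start (π y)) (Kq - (Mq+1)) (Mq+1) Kq (by omega) i j false hKq
      have e1 : stepSt T (PState.inside u v true) = PState.inside A B U := by
        have h' := hs1
        rw [Function.iterate_succ_apply', hMq] at h'
        exact h'
      simp only [stepSt, hbmp] at e1
      have hv1 : (v : ℕ) + 1 < n := by
        by_contra hv'
        simp only [goEast, dif_neg hv'] at e1
        cases e1
      simp only [goEast, dif_pos hv1] at e1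
      injection e1 with g1 g2 g3
      -- p just after the bump
      obtain ⟨A', B', U', hs2, hδ2⟩ :=
        chain T (start (π x)) (Kp - (Mp+1)) (Mp+1) Kp (by omega) i j true hKp
      have e2 : stepSt T (PState.inside u v false) = PState.inside A' B' U' := by
        have h' := hs2
        rw [Function.iterate_succ_apply', hMp] at h'
        exact h'
      simp only [stepSt, hbmp] at e2
      have hu : 0 < (u : ℕ) := by
        by_contra hu'
        simp only [goNorth, dif_neg hu'] at e2
        cases e2
      simp only [goNorth, dif_pos hu] at e2
      injection e2 with g1' g2' g3'
      have hAv : (A : ℕ) = u := by rw [← g1]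
      have hBv : (B : ℕ) = (v : ℕ) + 1 := by rw [← g2]
      have hA'v : (A' : ℕ) = (u : ℕ) - 1 := by rw [← g1']
      have hB'v : (B' : ℕ) = v := by rw [← g2']
      -- q just before the cross
      have hKq' : stepSt T ((stepSt T)^[Kq-1] (start (π y))) = PState.inside i j false := by
        have h' := hKq
        rw [show Kq = (Kq-1)+1 by omega, Function.iterate_succ_apply'] at h'
        exact h'
      obtain ⟨E, F, W, hE, hrelE⟩ := back T _ i j false hKq'
      rcases hrelE with ⟨hff, _, _⟩ | ⟨_, hE1, hE2⟩
      · exact Bool.noConfusion hff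
      -- p just before the cross
      have hKp' : stepSt T ((stepSt T)^[Kp-1] (start (π x))) = PState.inside i j true := by
        have h' := hKp
        rw [show Kp = (Kp-1)+1 by omega, Function.iterate_succ_apply'] at h'
        exact h'
      obtain ⟨E', F', W', hE', hrelE'⟩ := back T _ i j true hKp'
      rcases hrelE' with ⟨_, hE1', hE2'⟩ | ⟨hff, _, _⟩
      swap
      · exact Bool.noConfusion hff
      by_cases hD : Kq = Mq + 1
      · have hDp : Kp = Mp + 1 := by omega
        have hcon : (stepSt T)^[Kq] (start (π y)) = PState.inside A B U := by
          rw [hD]; exact hs1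
        rw [hKq] at hcon; injection hcon with c1 c2 c3
        have hc1 : (i : ℕ) = A := by rw [c1]
        have hcon' : (stepSt T)^[Kp] (start (π x)) = PState.inside A' B' U' := by
          rw [hDp]; exact hs2
        rw [hKp] at hcon'; injection hcon' with c1' c2' c3'
        have hc1' : (i : ℕ) = A' := by rw [c1']
        omega
      · obtain ⟨t, ht, a, b, v₁, v₂, hcol1, hcol2⟩ :=
          collide T (Kq - 1 - (Mq+1)) _ _ A B A' B' E F E' F' U U' W W' rfl rfl
            (by omega) (by omega)
            (by rw [← hs1, ← Function.iterate_add_apply,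
                  show (Kq - 1 - (Mq+1)) + (Mq+1) = Kq - 1 by omega]; exact hE)
            (by rw [← hs2, ← Function.iterate_add_apply,
                  show (Kq - 1 - (Mq+1)) + (Mp+1) = Kp - 1 by omega]; exact hE')
            (by omega)
        have hQ : (stepSt T)^[t + (Mq+1)] (start (π y)) = PState.inside a b v₁ := by
          rw [Function.iterate_add_apply, hs1]; exact hcol1
        have hP : (stepSt T)^[t + (Mp+1)] (start (π x)) = PState.inside a b v₂ := by
          rw [Function.iterate_add_apply, hs2]; exact hcol2
        obtain ⟨A2, B2, U2, hs3, hd3⟩ :=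
          chain T (start (π x)) (Kp - (t+Mp+2)) (t+Mp+2) Kp (by omega) i j true hKp
        have hn1 : ∃ (A B : Fin n) (U : Bool),
            stepSt T (PState.inside a b v₂) = PState.inside A B U := by
          refine ⟨A2, B2, U2, ?_⟩
          have h' := hs3
          rw [show t+Mp+2 = (t + (Mp+1))+1 by omega, Function.iterate_succ_apply', hP] at h'
          exact h'
        obtain ⟨A3, B3, U3, hs4, hd4⟩ :=
          chain T (start (π y)) (Kq - (t+Mq+2)) (t+Mq+2) Kq (by omega) i j false hKq
        have hn2 : ∃ (A B : Fin n) (U : Bool),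
            stepSt T (PState.inside a b v₁) = PState.inside A B U := by
          refine ⟨A3, B3, U3, ?_⟩
          have h' := hs4
          rw [show t+Mq+2 = (t + (Mq+1))+1 by omega, Function.iterate_succ_apply', hQ] at h'
          exact h'
        have hδc := delta_time T (start (π x)) (t + (Mp+1)) Kp (by omega) a b v₂ i j true hP hKp
        have hδc2 := delta_time T (start (π x)) Mp (t + (Mp+1)) (by omega) u v false a b v₂ hMp hP
        rcases shared_cell T π x y u v i j htr hbmpU honce hxy a b v₂ v₁ _ _ hP hQ hn1 hn2
          with hsh | hsh <;>
          (rw [Prod.mk.injEq] at hsh; obtain ⟨rfl, rfl⟩ := hsh; omega)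
  · -- Branch B : p enters the cross from the west, q from the south
    have hKpMp : Kp ≠ Mp := by
      intro h; rw [h, hMp] at hKp; injection hKp with e1 e2 e3; exact hij_ne_uv ⟨e1.symm, e2.symm⟩
    have hKqMq : Kq ≠ Mq := by
      intro h; rw [h, hMq] at hKq; injection hKq with e1 e2 e3; exact hij_ne_uv ⟨e1.symm, e2.symm⟩
    rcases lt_or_gt_of_ne hKpMp with ho | ho
    · -- cross before bump: impossible in this branch (IVT contradiction)
      exfalso
      have hdp := delta_time T (start (π x)) Kp Mp (le_of_lt ho) i j false u v false hKp hMp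
      have hoq : Kq < Mq := by
        rcases lt_or_gt_of_ne hKqMq with h | h
        · exact h
        · exfalso
          have := delta_time T (start (π y)) Mq Kq (le_of_lt h) u v true i j true hMq hKq
          omega
      have hdq := delta_time T (start (π y)) Kq Mq (le_of_lt hoq) i j true u v true hKq hMq
      -- p just after the cross
      obtain ⟨A, B, U, hs1, hδ1⟩ :=
        chain T (start (π x)) (Mp - (Kp+1)) (Kp+1) Mp (by omega) u v false hMp
      have e1 : stepSt T (PState.inside i j false) = PState.inside A B U := by
        have h' := hs1
        rw [Function.iterate_succ_apply', hKp] at h'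
        exact h'
      simp only [stepSt, hTij] at e1
      have hj1 : (j : ℕ) + 1 < n := by
        by_contra hj'
        simp only [goEast, dif_neg hj'] at e1
        cases e1
      simp only [goEast, dif_pos hj1] at e1
      injection e1 with g1 g2 g3
      -- q just after the cross
      obtain ⟨A', B', U', hs2, hδ2⟩ :=
        chain T (start (π y)) (Mq - (Kq+1)) (Kq+1) Mq (by omega) u v true hMq
      have e2 : stepSt T (PState.inside i j true) = PState.inside A' B' U' := by
        have h' := hs2
        rw [Function.iterate_succ_apply', hKq] at h'
        exact h'
      simp only [stepSt, hTij] at e2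
      have hi1 : 0 < (i : ℕ) := by
        by_contra hi'
        simp only [goNorth, dif_neg hi'] at e2
        cases e2
      simp only [goNorth, dif_pos hi1] at e2
      injection e2 with g1' g2' g3'
      have hAv : (A : ℕ) = i := by rw [← g1]
      have hBv : (B : ℕ) = (j : ℕ) + 1 := by rw [← g2]
      have hA'v : (A' : ℕ) = (i : ℕ) - 1 := by rw [← g1']
      have hB'v : (B' : ℕ) = j := by rw [← g2']
      -- p just before the bump
      have hMp' : stepSt T ((stepSt T)^[Mp-1] (start (π x))) = PState.inside u v false := by
        have h' := hMp
        rw [show Mp = (Mp-1)+1 by omega, Function.iterate_succ_apply'] at h'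
        exact h'
      obtain ⟨E, F, W, hE, hrelE⟩ := back T _ u v false hMp'
      rcases hrelE with ⟨hff, _, _⟩ | ⟨_, hE1, hE2⟩
      · exact Bool.noConfusion hff
      -- q just before the bump
      have hMq' : stepSt T ((stepSt T)^[Mq-1] (start (π y))) = PState.inside u v true := by
        have h' := hMq
        rw [show Mq = (Mq-1)+1 by omega, Function.iterate_succ_apply'] at h'
        exact h'
      obtain ⟨E', F', W', hE', hrelE'⟩ := back T _ u v true hMq'
      rcases hrelE' with ⟨_, hE1', hE2'⟩ | ⟨hff, _, _⟩
      swap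
      · exact Bool.noConfusion hff
      by_cases hD : Mp = Kp + 1
      · have hDq : Mq = Kq + 1 := by omega
        have hcon : (stepSt T)^[Mp] (start (π x)) = PState.inside A B U := by
          rw [hD]; exact hs1
        rw [hMp] at hcon; injection hcon with c1 c2 c3
        have hc1 : (u : ℕ) = A := by rw [c1]
        have hcon' : (stepSt T)^[Mq] (start (π y)) = PState.inside A' B' U' := by
          rw [hDq]; exact hs2
        rw [hMq] at hcon'; injection hcon' with c1' c2' c3'
        have hc1' : (u : ℕ) = A' := by rw [c1']
        omega
      · obtain ⟨t, ht, a, b, v₁, v₂, hcol1, hcol2⟩ :=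
          collide T (Mp - 1 - (Kp+1)) _ _ A B A' B' E F E' F' U U' W W' rfl rfl
            (by omega) (by omega)
            (by rw [← hs1, ← Function.iterate_add_apply,
                  show (Mp - 1 - (Kp+1)) + (Kp+1) = Mp - 1 by omega]; exact hE)
            (by rw [← hs2, ← Function.iterate_add_apply,
                  show (Mp - 1 - (Kp+1)) + (Kq+1) = Mq - 1 by omega]; exact hE')
            (by omega)
        have hP : (stepSt T)^[t + (Kp+1)] (start (π x)) = PState.inside a b v₁ := by
          rw [Function.iterate_add_apply, hs1]; exact hcol1
        have hQ : (stepSt T)^[t + (Kq+1)] (start (π y)) = PState.inside a b v₂ := by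
          rw [Function.iterate_add_apply, hs2]; exact hcol2
        obtain ⟨A2, B2, U2, hs3, hd3⟩ :=
          chain T (start (π x)) (Mp - (t+Kp+2)) (t+Kp+2) Mp (by omega) u v false hMp
        have hn1 : ∃ (A B : Fin n) (U : Bool),
            stepSt T (PState.inside a b v₁) = PState.inside A B U := by
          refine ⟨A2, B2, U2, ?_⟩
          have h' := hs3
          rw [show t+Kp+2 = (t + (Kp+1))+1 by omega, Function.iterate_succ_apply', hP] at h'
          exact h'
        obtain ⟨A3, B3, U3, hs4, hd4⟩ :=
          chain T (start (π y)) (Mq - (t+Kq+2)) (t+Kq+2) Mq (by omega) u v true hMq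
        have hn2 : ∃ (A B : Fin n) (U : Bool),
            stepSt T (PState.inside a b v₂) = PState.inside A B U := by
          refine ⟨A3, B3, U3, ?_⟩
          have h' := hs4
          rw [show t+Kq+2 = (t + (Kq+1))+1 by omega, Function.iterate_succ_apply', hQ] at h'
          exact h'
        have hδc := delta_time T (start (π x)) (t + (Kp+1)) Mp (by omega) a b v₁ u v false hP hMp
        have hδc2 := delta_time T (start (π x)) Kp (t + (Kp+1)) (by omega) i j false a b v₁ hKp hP
        rcases shared_cell T π x y u v i j htr hbmpU honce hxy a b v₁ v₂ _ _ hP hQ hn1 hn2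
          with hsh | hsh <;>
          (rw [Prod.mk.injEq] at hsh; obtain ⟨rfl, rfl⟩ := hsh; omega)
    · -- bump before cross: direct construction through the swapped tiles
      have hdp := delta_time T (start (π x)) Mp Kp (le_of_lt ho) u v false i j false hMp hKp
      have hoq : Mq < Kq := by
        rcases lt_or_gt_of_ne hKqMq with h | h
        · exfalso
          have := delta_time T (start (π y)) Kq Mq (le_of_lt h) i j true u v true hKq hMq
          omega
        · exact h
      have hdq := delta_time T (start (π y)) Mq Kq (le_of_lt hoq) u v true i j true hMq hKq
      have htr1 : (stepSt (swapCrossBump T u v i j))^[Mp] (start (π x)) =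
          PState.inside u v false :=
        transfer_early T u v i j _ Mp u v false hMp
          (by intro m hm1 hm2; constructor <;> intro hEq <;> omega)
      obtain ⟨A, B, U, hs2, hδ2⟩ :=
        chain T (start (π y)) (Kq - (Mq+1)) (Mq+1) Kq (by omega) i j true hKq
      have e2 : stepSt T (PState.inside u v true) = PState.inside A B U := by
        have h' := hs2
        rw [Function.iterate_succ_apply', hMq] at h'
        exact h'
      simp only [stepSt, hbmp] at e2
      have e1 : stepSt (swapCrossBump T u v i j) (PState.inside u v false) =
          PState.inside A B U := by
        simp only [stepSt, swap_uv]
        exact e2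
      have hstep : (stepSt (swapCrossBump T u v i j))^[Mp+1] (start (π x)) =
          PState.inside A B U := by
        rw [Function.iterate_succ_apply', htr1]; exact e1
      have hTpath : (stepSt T)^[Kq - (Mq+1)] (PState.inside A B U) = PState.inside i j true := by
        rw [← hs2, ← Function.iterate_add_apply, show (Kq-(Mq+1)) + (Mq+1) = Kq by omega]
        exact hKq
      have htr2 : (stepSt (swapCrossBump T u v i j))^[Kq - (Mq+1)] (PState.inside A B U) =
          PState.inside i j true :=
        transfer_early T u v i j _ (Kq - (Mq+1)) i j true hTpath
          (by intro m hm1 hm2; constructor <;> intro hEq <;> omega)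
      refine ⟨(Kq - (Mq+1)) + (Mp+1), ?_⟩
      rw [Function.iterate_add_apply, hstep]
      exact htr2
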